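/- arXiv:1205.3306 — 4 statements merged into one kernel-verified Lean document; each statement's English description precedes it below -/
import Mathlib

section
/- Let I ⊆ ℝ be an open interval, μ ∈ ℝ, and let R, Λ, Θ, U : I → ℝ be C¹ functions with R > 0, R² = U² − μ², (R')² + (R²/(R² + μ²))·(Λ')² = 1, and Θ' = (μ/(R² + μ²))·Λ' on I. Define the helicoidal patch X : I × ℝ → ℝ³ by X(s,t) = (R(s)·cos(t − Θ(s)), R(s)·sin(t − Θ(s)), Λ(s) + μ·(t − Θ(s))). Then for every (s,t) ∈ I × ℝ the first fundamental form coefficients satisfy E(s,t) = 1, F(s,t) = 0, and G(s,t) = U(s)². -/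
open Real

noncomputable section

/-- Euclidean dot product on `ℝ³ = ℝ × ℝ × ℝ`. -/
def dot3 (v w : ℝ × ℝ × ℝ) : ℝ := v.1 * w.1 + v.2.1 * w.2.1 + v.2.2 * w.2.2

/-- Cross product on `ℝ³ = ℝ × ℝ × ℝ`. -/
def cross3 (v w : ℝ × ℝ × ℝ) : ℝ × ℝ × ℝ :=
  (v.2.1 * w.2.2 - v.2.2 * w.2.1,
   v.2.2 * w.1 - v.1 * w.2.2,
   v.1 * w.2.1 - v.2.1 * w.1)

/-- The vertical unit vector `e₃ = (0,0,1)`. -/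
def e3 : ℝ × ℝ × ℝ := ((0 : ℝ), (0 : ℝ), (1 : ℝ))

/-- Partial derivative of a parametrized surface w.r.t. the first parameter. -/
def pd1 (X : ℝ → ℝ → ℝ × ℝ × ℝ) (s t : ℝ) : ℝ × ℝ × ℝ := deriv (fun u => X u t) s

/-- Partial derivative of a parametrized surface w.r.t. the second parameter. -/
def pd2 (X : ℝ → ℝ → ℝ × ℝ × ℝ) (s t : ℝ) : ℝ × ℝ × ℝ := deriv (fun v => X s v) t

/-- Unit normal `n = (X_s × X_t)/‖X_s × X_t‖`. -/
def unitNormal (X : ℝ → ℝ → ℝ × ℝ × ℝ) (s t : ℝ) : ℝ × ℝ × ℝ :=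
  (Real.sqrt (dot3 (cross3 (pd1 X s t) (pd2 X s t)) (cross3 (pd1 X s t) (pd2 X s t))))⁻¹ •
    cross3 (pd1 X s t) (pd2 X s t)

/-- Angle function `n₃ = n · e₃`. -/
def angleFun (X : ℝ → ℝ → ℝ × ℝ × ℝ) (s t : ℝ) : ℝ := dot3 (unitNormal X s t) e3

/-- Gaussian curvature `K = ((X_ss·n)(X_tt·n) − (X_st·n)²)/(EG − F²)`. -/
def gauss (X : ℝ → ℝ → ℝ × ℝ × ℝ) (s t : ℝ) : ℝ :=
  (dot3 (pd1 (pd1 X) s t) (unitNormal X s t) * dot3 (pd2 (pd2 X) s t) (unitNormal X s t)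
      - (dot3 (pd2 (pd1 X) s t) (unitNormal X s t)) ^ 2)
    / (dot3 (pd1 X s t) (pd1 X s t) * dot3 (pd2 X s t) (pd2 X s t)
        - (dot3 (pd1 X s t) (pd2 X s t)) ^ 2)

/-! `X` is the orbit of a profile curve under the screw motions of pitch `μ` about the
`e₃`-axis, so `G = R² + μ²` and `F = μΛ' − (R² + μ²)Θ'`. The condition on `Θ'` is exactly
`F = 0`, and it turns `E = R'² + R²Θ'² + (Λ' − μΘ')²` into `R'² + R²Λ'²/(R² + μ²) = 1`. -/

def helicoidalPatch (μ : ℝ) (R Θ Λ : ℝ → ℝ) (s t : ℝ) : ℝ × ℝ × ℝ :=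
  (R s * cos (t - Θ s), R s * sin (t - Θ s), Λ s + μ * (t - Θ s))

section HelicoidalPatch

variable (μ : ℝ) {R Θ Λ : ℝ → ℝ} {R' Θ' Λ' s : ℝ} (t : ℝ)

theorem pd1_helicoidalPatch (hR : HasDerivAt R R' s) (hΘ : HasDerivAt Θ Θ' s)
    (hΛ : HasDerivAt Λ Λ' s) :
    pd1 (helicoidalPatch μ R Θ Λ) s t =
      (R' * cos (t - Θ s) + R s * Θ' * sin (t - Θ s),
       R' * sin (t - Θ s) - R s * Θ' * cos (t - Θ s),
       Λ' - μ * Θ') := by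
  have hφ : HasDerivAt (fun u => t - Θ u) (-Θ') s := hΘ.const_sub t
  have hX : HasDerivAt (fun u => helicoidalPatch μ R Θ Λ u t) _ s :=
    (hR.mul hφ.cos).prodMk ((hR.mul hφ.sin).prodMk (hΛ.add (hφ.const_mul μ)))
  rw [pd1, hX.deriv]
  ext <;> simp only <;> ring

theorem pd2_helicoidalPatch (R Θ Λ : ℝ → ℝ) (s : ℝ) :
    pd2 (helicoidalPatch μ R Θ Λ) s t =
      (-(R s * sin (t - Θ s)), R s * cos (t - Θ s), μ) := by
  have hφ : HasDerivAt (fun v => v - Θ s) 1 t := (hasDerivAt_id t).sub_const _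
  have hX : HasDerivAt (fun v => helicoidalPatch μ R Θ Λ s v) _ t :=
    (hφ.cos.const_mul (R s)).prodMk
      ((hφ.sin.const_mul (R s)).prodMk ((hasDerivAt_const t (Λ s)).add (hφ.const_mul μ)))
  rw [pd2, hX.deriv]
  ext <;> simp only <;> ring

theorem dot3_pd1_pd1_helicoidalPatch (hR : HasDerivAt R R' s) (hΘ : HasDerivAt Θ Θ' s)
    (hΛ : HasDerivAt Λ Λ' s) :
    dot3 (pd1 (helicoidalPatch μ R Θ Λ) s t) (pd1 (helicoidalPatch μ R Θ Λ) s t) =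
      R' ^ 2 + R s ^ 2 * Θ' ^ 2 + (Λ' - μ * Θ') ^ 2 := by
  rw [pd1_helicoidalPatch μ t hR hΘ hΛ, dot3]
  linear_combination (R' ^ 2 + R s ^ 2 * Θ' ^ 2) * cos_sq_add_sin_sq (t - Θ s)

theorem dot3_pd1_pd2_helicoidalPatch (hR : HasDerivAt R R' s) (hΘ : HasDerivAt Θ Θ' s)
    (hΛ : HasDerivAt Λ Λ' s) :
    dot3 (pd1 (helicoidalPatch μ R Θ Λ) s t) (pd2 (helicoidalPatch μ R Θ Λ) s t) =
      μ * Λ' - (R s ^ 2 + μ ^ 2) * Θ' := by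
  rw [pd1_helicoidalPatch μ t hR hΘ hΛ, pd2_helicoidalPatch, dot3]
  linear_combination -(R s ^ 2 * Θ') * sin_sq_add_cos_sq (t - Θ s)

theorem dot3_pd2_pd2_helicoidalPatch (R Θ Λ : ℝ → ℝ) (s : ℝ) :
    dot3 (pd2 (helicoidalPatch μ R Θ Λ) s t) (pd2 (helicoidalPatch μ R Θ Λ) s t) =
      R s ^ 2 + μ ^ 2 := by
  rw [pd2_helicoidalPatch, dot3]
  linear_combination R s ^ 2 * sin_sq_add_cos_sq (t - Θ s)

end HelicoidalPatch

theorem bour_first_fundamental_form_general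
    (I : Set ℝ) (hIopen : IsOpen I) (μ : ℝ)
    (R Λ Θ U : ℝ → ℝ)
    (hRC : ContDiffOn ℝ 1 R I) (hΛC : ContDiffOn ℝ 1 Λ I)
    (hΘC : ContDiffOn ℝ 1 Θ I)
    (hRpos : ∀ s ∈ I, 0 < R s)
    (hRU : ∀ s ∈ I, (R s) ^ 2 = (U s) ^ 2 - μ ^ 2)
    (hmetric : ∀ s ∈ I,
      (deriv R s) ^ 2 + ((R s) ^ 2 / ((R s) ^ 2 + μ ^ 2)) * (deriv Λ s) ^ 2 = 1)
    (hΘ' : ∀ s ∈ I, deriv Θ s = (μ / ((R s) ^ 2 + μ ^ 2)) * deriv Λ s)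
    (X : ℝ → ℝ → ℝ × ℝ × ℝ)
    (hX : ∀ s t, X s t =
      (R s * Real.cos (t - Θ s), R s * Real.sin (t - Θ s), Λ s + μ * (t - Θ s))) :
    ∀ s ∈ I, ∀ t : ℝ,
      dot3 (pd1 X s t) (pd1 X s t) = 1 ∧
      dot3 (pd1 X s t) (pd2 X s t) = 0 ∧
      dot3 (pd2 X s t) (pd2 X s t) = (U s) ^ 2 := by
  intro s hs t
  have hasDerivAt_of_contDiffOn {f : ℝ → ℝ} (hf : ContDiffOn ℝ 1 f I) :
      HasDerivAt f (deriv f s) s :=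
    ((hf.differentiableOn one_ne_zero).differentiableAt (hIopen.mem_nhds hs)).hasDerivAt
  have hR := hasDerivAt_of_contDiffOn hRC
  have hΘ := hasDerivAt_of_contDiffOn hΘC
  have hΛ := hasDerivAt_of_contDiffOn hΛC
  obtain rfl : X = helicoidalPatch μ R Θ Λ := funext fun s => funext (hX s)
  have hRμ : R s ^ 2 + μ ^ 2 ≠ 0 := by have := hRpos s hs; positivity
  rw [dot3_pd1_pd1_helicoidalPatch μ t hR hΘ hΛ, dot3_pd1_pd2_helicoidalPatch μ t hR hΘ hΛ,
    dot3_pd2_pd2_helicoidalPatch, hΘ' s hs]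
  refine ⟨?_, by field_simp; ring, by rw [hRU s hs]; ring⟩
  rw [← hmetric s hs]
  field_simp
  ring

/-- For Bour's helicoidal patch with pitch `μ`, the first fundamental
form coefficients are `E = 1`, `F = 0`, `G = U²`. -/
theorem bour_first_fundamental_form
    (I : Set ℝ) (hIopen : IsOpen I) (hIconn : I.OrdConnected) (μ : ℝ)
    (R Λ Θ U : ℝ → ℝ)
    (hRC : ContDiffOn ℝ 1 R I) (hΛC : ContDiffOn ℝ 1 Λ I)
    (hΘC : ContDiffOn ℝ 1 Θ I) (hUC : ContDiffOn ℝ 1 U I)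
    (hRpos : ∀ s ∈ I, 0 < R s)
    (hRU : ∀ s ∈ I, (R s) ^ 2 = (U s) ^ 2 - μ ^ 2)
    (hmetric : ∀ s ∈ I,
      (deriv R s) ^ 2 + ((R s) ^ 2 / ((R s) ^ 2 + μ ^ 2)) * (deriv Λ s) ^ 2 = 1)
    (hΘ' : ∀ s ∈ I, deriv Θ s = (μ / ((R s) ^ 2 + μ ^ 2)) * deriv Λ s)
    (X : ℝ → ℝ → ℝ × ℝ × ℝ)
    (hX : ∀ s t, X s t =
      (R s * Real.cos (t - Θ s), R s * Real.sin (t - Θ s), Λ s + μ * (t - Θ s))) :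
    ∀ s ∈ I, ∀ t : ℝ,
      dot3 (pd1 X s t) (pd1 X s t) = 1 ∧
      dot3 (pd1 X s t) (pd2 X s t) = 0 ∧
      dot3 (pd2 X s t) (pd2 X s t) = (U s) ^ 2 :=
  bour_first_fundamental_form_general I hIopen μ R Λ Θ U hRC hΛC hΘC hRpos hRU hmetric hΘ' X hX
end
end

section
/- Let I ⊆ ℝ be an open interval, μ ∈ ℝ, and let R, Λ, Θ, U : I → ℝ be C¹ functions with R > 0, R² = U² − μ², (R')² + (R²/(R² + μ²))·(Λ')² = 1, and Θ' = (μ/(R² + μ²))·Λ' on I. Define X(s,t) = (R(s)·cos(t − Θ(s)), R(s)·sin(t − Θ(s)), Λ(s) + μ·(t − Θ(s))). Then for every (s,t) ∈ I × ℝ one has ((X_s × X_t)·e₃)² = U(s)²·U'(s)² and ‖X_s × X_t‖² = U(s)²; in particular the squared angle function satisfies n₃² = (U')². -/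
open Real

noncomputable section

/-!
Write `c = cos (t - Θ)` and `σ = sin (t - Θ)`. Then `X_t = (-R σ, R c, μ)` and
`X_s = (R' c + R σ Θ', R' σ - R c Θ', Λ' - μ Θ')`, so all terms in `Θ'` cancel from the cross
product: `X_s × X_t = (μ R' σ - R c Λ', -R σ Λ' - μ R' c, R R')`. Its vertical component is
`R R' = U U'` (differentiate `R² = U² - μ²`), and its squared length
`(R² + μ²) R'² + R² Λ'²` equals `R² + μ² = U²` by the metric condition.
-/

theorem dot3_self_nonneg (v : ℝ × ℝ × ℝ) : 0 ≤ dot3 v v :=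
  add_nonneg (add_nonneg (mul_self_nonneg _) (mul_self_nonneg _)) (mul_self_nonneg _)

theorem dot3_smul_left (a : ℝ) (v w : ℝ × ℝ × ℝ) : dot3 (a • v) w = a * dot3 v w := by
  simp only [dot3, Prod.smul_fst, Prod.smul_snd, smul_eq_mul]
  ring

theorem angleFun_sq (X : ℝ → ℝ → ℝ × ℝ × ℝ) (s t : ℝ) :
    angleFun X s t ^ 2 =
      dot3 (cross3 (pd1 X s t) (pd2 X s t)) e3 ^ 2 /
        dot3 (cross3 (pd1 X s t) (pd2 X s t)) (cross3 (pd1 X s t) (pd2 X s t)) := by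
  rw [angleFun, unitNormal, dot3_smul_left, mul_pow, inv_pow, sq_sqrt (dot3_self_nonneg _),
    div_eq_inv_mul]

theorem mul_deriv_eq_of_sq_eventuallyEq {f g : ℝ → ℝ} {x c : ℝ}
    (hf : DifferentiableAt ℝ f x) (hg : DifferentiableAt ℝ g x)
    (hfg : ∀ᶠ y in nhds x, f y ^ 2 = g y ^ 2 - c) :
    f x * deriv f x = g x * deriv g x := by
  have hderiv : deriv (fun y => f y ^ 2) x = deriv (fun y => g y ^ 2 - c) x :=
    Filter.EventuallyEq.deriv_eq hfg
  rw [deriv_fun_pow hf, deriv_sub_const, deriv_fun_pow hg] at hderiv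
  linear_combination hderiv / 2

def bourPatch (μ : ℝ) (R Λ Θ : ℝ → ℝ) (s t : ℝ) : ℝ × ℝ × ℝ :=
  (R s * cos (t - Θ s), R s * sin (t - Θ s), Λ s + μ * (t - Θ s))

section BourPatch

variable {μ : ℝ} {R Λ Θ : ℝ → ℝ} {s t r' l' θ' : ℝ}

theorem pd1_bourPatch (hR : HasDerivAt R r' s) (hΛ : HasDerivAt Λ l' s)
    (hΘ : HasDerivAt Θ θ' s) :
    pd1 (bourPatch μ R Λ Θ) s t =
      (r' * cos (t - Θ s) + R s * sin (t - Θ s) * θ',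
        r' * sin (t - Θ s) - R s * cos (t - Θ s) * θ', l' - μ * θ') := by
  have hphase : HasDerivAt (fun u => t - Θ u) (-θ') s := hΘ.const_sub t
  have hcos := hR.mul hphase.cos
  have hsin := hR.mul hphase.sin
  have hheight := hΛ.add (hphase.const_mul μ)
  have hpatch : HasDerivAt (fun u => bourPatch μ R Λ Θ u t) _ s :=
    hcos.prodMk (hsin.prodMk hheight)
  rw [pd1, hpatch.deriv]
  simp only [Prod.mk.injEq]
  exact ⟨by ring, by ring, by ring⟩

theorem pd2_bourPatch :
    pd2 (bourPatch μ R Λ Θ) s t = (-(R s * sin (t - Θ s)), R s * cos (t - Θ s), μ) := by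
  have hphase : HasDerivAt (fun v => v - Θ s) 1 t := (hasDerivAt_id t).sub_const (Θ s)
  have hcos := hphase.cos.const_mul (R s)
  have hsin := hphase.sin.const_mul (R s)
  have hheight := (hphase.const_mul μ).const_add (Λ s)
  have hpatch : HasDerivAt (fun v => bourPatch μ R Λ Θ s v) _ t :=
    hcos.prodMk (hsin.prodMk hheight)
  rw [pd2, hpatch.deriv]
  simp only [Prod.mk.injEq]
  exact ⟨by ring, by ring, by ring⟩

theorem cross3_pd_bourPatch (hR : HasDerivAt R r' s) (hΛ : HasDerivAt Λ l' s)
    (hΘ : HasDerivAt Θ θ' s) :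
    cross3 (pd1 (bourPatch μ R Λ Θ) s t) (pd2 (bourPatch μ R Λ Θ) s t) =
      (μ * r' * sin (t - Θ s) - R s * l' * cos (t - Θ s),
        -(R s * l' * sin (t - Θ s)) - μ * r' * cos (t - Θ s), R s * r') := by
  rw [pd1_bourPatch hR hΛ hΘ, pd2_bourPatch, cross3]
  have hpyth := sin_sq_add_cos_sq (t - Θ s)
  simp only [Prod.mk.injEq]
  exact ⟨by ring, by ring, by linear_combination R s * r' * hpyth⟩

theorem dot3_cross3_pd_bourPatch_e3 (hR : HasDerivAt R r' s) (hΛ : HasDerivAt Λ l' s)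
    (hΘ : HasDerivAt Θ θ' s) :
    dot3 (cross3 (pd1 (bourPatch μ R Λ Θ) s t) (pd2 (bourPatch μ R Λ Θ) s t)) e3 = R s * r' := by
  rw [cross3_pd_bourPatch hR hΛ hΘ, dot3, e3]
  ring

theorem dot3_cross3_pd_bourPatch_self (hR : HasDerivAt R r' s) (hΛ : HasDerivAt Λ l' s)
    (hΘ : HasDerivAt Θ θ' s) :
    dot3 (cross3 (pd1 (bourPatch μ R Λ Θ) s t) (pd2 (bourPatch μ R Λ Θ) s t))
        (cross3 (pd1 (bourPatch μ R Λ Θ) s t) (pd2 (bourPatch μ R Λ Θ) s t)) =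
      (R s ^ 2 + μ ^ 2) * r' ^ 2 + R s ^ 2 * l' ^ 2 := by
  rw [cross3_pd_bourPatch hR hΛ hΘ, dot3]
  linear_combination (μ ^ 2 * r' ^ 2 + R s ^ 2 * l' ^ 2) * sin_sq_add_cos_sq (t - Θ s)

end BourPatch

theorem bour_angle_function_general
    (I : Set ℝ) (hIopen : IsOpen I) (μ : ℝ)
    (R Λ Θ U : ℝ → ℝ)
    (hRC : ContDiffOn ℝ 1 R I) (hΛC : ContDiffOn ℝ 1 Λ I)
    (hΘC : ContDiffOn ℝ 1 Θ I) (hUC : ContDiffOn ℝ 1 U I)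
    (hRpos : ∀ s ∈ I, 0 < R s)
    (hRU : ∀ s ∈ I, (R s) ^ 2 = (U s) ^ 2 - μ ^ 2)
    (hmetric : ∀ s ∈ I,
      (deriv R s) ^ 2 + ((R s) ^ 2 / ((R s) ^ 2 + μ ^ 2)) * (deriv Λ s) ^ 2 = 1)
    (X : ℝ → ℝ → ℝ × ℝ × ℝ)
    (hX : ∀ s t, X s t =
      (R s * Real.cos (t - Θ s), R s * Real.sin (t - Θ s), Λ s + μ * (t - Θ s))) :
    ∀ s ∈ I, ∀ t : ℝ,
      (dot3 (cross3 (pd1 X s t) (pd2 X s t)) e3) ^ 2 = (U s) ^ 2 * (deriv U s) ^ 2 ∧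
      dot3 (cross3 (pd1 X s t) (pd2 X s t)) (cross3 (pd1 X s t) (pd2 X s t)) = (U s) ^ 2 ∧
      (angleFun X s t) ^ 2 = (deriv U s) ^ 2 := by
  intro s hs t
  obtain rfl : X = bourPatch μ R Λ Θ := funext fun s => funext (hX s)
  have hdiff {f : ℝ → ℝ} (hf : ContDiffOn ℝ 1 f I) : DifferentiableAt ℝ f s :=
    (hf.differentiableOn one_ne_zero).differentiableAt (hIopen.mem_nhds hs)
  have hRR' : R s * deriv R s = U s * deriv U s :=
    mul_deriv_eq_of_sq_eventuallyEq (hdiff hRC) (hdiff hUC)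
      (Filter.eventually_of_mem (hIopen.mem_nhds hs) hRU)
  have hU : U s ^ 2 = R s ^ 2 + μ ^ 2 := by linarith [hRU s hs]
  have hUne : U s ≠ 0 := by intro hU0; nlinarith [hRpos s hs]
  have hRd := (hdiff hRC).hasDerivAt
  have hΛd := (hdiff hΛC).hasDerivAt
  have hΘd := (hdiff hΘC).hasDerivAt
  have hvert := dot3_cross3_pd_bourPatch_e3 (μ := μ) (t := t) hRd hΛd hΘd
  have hnormSq := dot3_cross3_pd_bourPatch_self (μ := μ) (t := t) hRd hΛd hΘd
  have hmetric' := hmetric s hs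
  rw [← hU] at hmetric' hnormSq
  field_simp at hmetric'
  replace hnormSq := hnormSq.trans (by linarith : _ = U s ^ 2)
  refine ⟨by rw [hvert, hRR', mul_pow], hnormSq, ?_⟩
  rw [angleFun_sq, hvert, hnormSq, hRR', mul_pow]
  field_simp

/-- For Bour's helicoidal patch, `((X_s × X_t)·e₃)² = U²·(U')²` and
`‖X_s × X_t‖² = U²`; in particular the squared angle function satisfies `n₃² = (U')²`. -/
theorem bour_angle_function
    (I : Set ℝ) (hIopen : IsOpen I) (hIconn : I.OrdConnected) (μ : ℝ)
    (R Λ Θ U : ℝ → ℝ)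
    (hRC : ContDiffOn ℝ 1 R I) (hΛC : ContDiffOn ℝ 1 Λ I)
    (hΘC : ContDiffOn ℝ 1 Θ I) (hUC : ContDiffOn ℝ 1 U I)
    (hRpos : ∀ s ∈ I, 0 < R s)
    (hRU : ∀ s ∈ I, (R s) ^ 2 = (U s) ^ 2 - μ ^ 2)
    (hmetric : ∀ s ∈ I,
      (deriv R s) ^ 2 + ((R s) ^ 2 / ((R s) ^ 2 + μ ^ 2)) * (deriv Λ s) ^ 2 = 1)
    (hΘ' : ∀ s ∈ I, deriv Θ s = (μ / ((R s) ^ 2 + μ ^ 2)) * deriv Λ s)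
    (X : ℝ → ℝ → ℝ × ℝ × ℝ)
    (hX : ∀ s t, X s t =
      (R s * Real.cos (t - Θ s), R s * Real.sin (t - Θ s), Λ s + μ * (t - Θ s))) :
    ∀ s ∈ I, ∀ t : ℝ,
      (dot3 (cross3 (pd1 X s t) (pd2 X s t)) e3) ^ 2 = (U s) ^ 2 * (deriv U s) ^ 2 ∧
      dot3 (cross3 (pd1 X s t) (pd2 X s t)) (cross3 (pd1 X s t) (pd2 X s t)) = (U s) ^ 2 ∧
      (angleFun X s t) ^ 2 = (deriv U s) ^ 2 :=
  bour_angle_function_general I hIopen μ R Λ Θ U hRC hΛC hΘC hUC hRpos hRU hmetric X hX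
end
end

section
/- Let c ∈ ℝ and let I ⊆ (0, ∞) be an open interval on which U² + c − 1 > 0. Let Λ : I → ℝ be a C² function with Λ'(U) = √(U² + c − 1) for all U ∈ I. Define the rotational patch X(U,t) = (U·cos t, U·sin t, Λ(U)). Then for every (U,t) ∈ I × ℝ: the first fundamental form coefficients are E = U² + c, F = 0, G = U²; the squared angle function is n₃² = 1/(U² + c); and the Gaussian curvature is K = 1/(U² + c)². In particular K = n₃⁴, so X is a K^{1/4}-translator. -/
open Real

noncomputable section

/-!
For the surface of revolution `(u cos t, u sin t, Λ u)` with `p = Λ'(u)`, `q = Λ''(u)` one has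
`E = 1 + p²`, `F = 0`, `G = u²`, `n = (1 + p²)^(-1/2) (-p cos t, -p sin t, 1)` and
`K = p q / (u (1 + p²)²)`. For `p = √(u² + c - 1)` we get `1 + p² = u² + c` and `p q = u`,
so `K = (u² + c)⁻² = n₃⁴`.
-/

open Topology

def rotationalPatch (Λ : ℝ → ℝ) (u t : ℝ) : ℝ × ℝ × ℝ := (u * cos t, u * sin t, Λ u)

namespace rotationalPatch

variable {Λ : ℝ → ℝ} {u p : ℝ}

theorem pd1_eq (hΛ : HasDerivAt Λ p u) (t : ℝ) :
    pd1 (rotationalPatch Λ) u t = (cos t, sin t, p) := by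
  have h : HasDerivAt (fun w => rotationalPatch Λ w t) (cos t, sin t, p) u :=
    ((hasDerivAt_mul_const (cos t)).prodMk ((hasDerivAt_mul_const (sin t)).prodMk hΛ))
  exact h.deriv

theorem pd2_eq (u t : ℝ) :
    pd2 (rotationalPatch Λ) u t = (-(u * sin t), u * cos t, 0) := by
  have h : HasDerivAt (fun v => rotationalPatch Λ u v) (-(u * sin t), u * cos t, 0) t := by
    refine HasDerivAt.prodMk ?_ (((hasDerivAt_sin t).const_mul u).prodMk (hasDerivAt_const t _))
    simpa using (hasDerivAt_cos t).const_mul u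
  exact h.deriv

theorem pd1_pd1_eq {Λ' : ℝ → ℝ} {q : ℝ} (hΛ : ∀ᶠ w in 𝓝 u, HasDerivAt Λ (Λ' w) w)
    (hΛ' : HasDerivAt Λ' q u) (t : ℝ) :
    pd1 (pd1 (rotationalPatch Λ)) u t = (0, 0, q) := by
  have hpd1 : (fun w => pd1 (rotationalPatch Λ) w t) =ᶠ[𝓝 u] fun w => (cos t, sin t, Λ' w) := by
    filter_upwards [hΛ] with w hw using pd1_eq hw t
  exact (((hasDerivAt_const u _).prodMk ((hasDerivAt_const u _).prodMk hΛ')).congr_of_eventuallyEq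
    hpd1).deriv

theorem pd2_pd1_eq (hΛ : HasDerivAt Λ p u) (t : ℝ) :
    pd2 (pd1 (rotationalPatch Λ)) u t = (-sin t, cos t, 0) := by
  have hpd1 : (fun v => pd1 (rotationalPatch Λ) u v) = fun v => (cos v, sin v, p) :=
    funext (pd1_eq hΛ)
  exact (hpd1 ▸ (hasDerivAt_cos t).prodMk ((hasDerivAt_sin t).prodMk (hasDerivAt_const t p))).deriv

theorem pd2_pd2_eq (t : ℝ) :
    pd2 (pd2 (rotationalPatch Λ)) u t = (-(u * cos t), -(u * sin t), 0) := by
  have hpd2 : (fun v => pd2 (rotationalPatch Λ) u v) = fun v => (-(u * sin v), u * cos v, 0) :=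
    funext (pd2_eq u)
  have h : HasDerivAt (fun v => pd2 (rotationalPatch Λ) u v) (-(u * cos t), -(u * sin t), 0) t := by
    rw [hpd2]
    refine ((hasDerivAt_sin t).const_mul u).neg.prodMk (HasDerivAt.prodMk ?_ (hasDerivAt_const t _))
    simpa using (hasDerivAt_cos t).const_mul u
  exact h.deriv

theorem dot3_pd1_pd1 (hΛ : HasDerivAt Λ p u) (t : ℝ) :
    dot3 (pd1 (rotationalPatch Λ) u t) (pd1 (rotationalPatch Λ) u t) = 1 + p ^ 2 := by
  rw [pd1_eq hΛ, dot3]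
  linear_combination sin_sq_add_cos_sq t

theorem dot3_pd1_pd2 (hΛ : HasDerivAt Λ p u) (t : ℝ) :
    dot3 (pd1 (rotationalPatch Λ) u t) (pd2 (rotationalPatch Λ) u t) = 0 := by
  rw [pd1_eq hΛ, pd2_eq, dot3]
  ring

theorem dot3_pd2_pd2 (t : ℝ) :
    dot3 (pd2 (rotationalPatch Λ) u t) (pd2 (rotationalPatch Λ) u t) = u ^ 2 := by
  rw [pd2_eq, dot3]
  linear_combination u ^ 2 * sin_sq_add_cos_sq t

theorem cross3_pd1_pd2 (hΛ : HasDerivAt Λ p u) (t : ℝ) :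
    cross3 (pd1 (rotationalPatch Λ) u t) (pd2 (rotationalPatch Λ) u t) =
      u • (-(p * cos t), -(p * sin t), 1) := by
  rw [pd1_eq hΛ, pd2_eq, cross3]
  simp only [Prod.smul_mk, smul_eq_mul, Prod.mk.injEq]
  refine ⟨by ring, by ring, ?_⟩
  linear_combination u * sin_sq_add_cos_sq t

theorem unitNormal_eq (hu : 0 < u) (hΛ : HasDerivAt Λ p u) (t : ℝ) :
    unitNormal (rotationalPatch Λ) u t = (√(1 + p ^ 2))⁻¹ • (-(p * cos t), -(p * sin t), 1) := by
  have hnorm : dot3 (u • (-(p * cos t), -(p * sin t), 1)) (u • (-(p * cos t), -(p * sin t), 1)) =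
      (u * √(1 + p ^ 2)) ^ 2 := by
    simp only [dot3, Prod.smul_mk, smul_eq_mul]
    rw [mul_pow, sq_sqrt (by positivity)]
    linear_combination u ^ 2 * p ^ 2 * sin_sq_add_cos_sq t
  rw [unitNormal, cross3_pd1_pd2 hΛ, hnorm, sqrt_sq (by positivity), smul_smul, mul_inv_rev,
    inv_mul_cancel_right₀ hu.ne']

theorem angleFun_eq (hu : 0 < u) (hΛ : HasDerivAt Λ p u) (t : ℝ) :
    angleFun (rotationalPatch Λ) u t = (√(1 + p ^ 2))⁻¹ := by
  simp [angleFun, unitNormal_eq hu hΛ, dot3, e3]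

theorem gauss_eq {Λ' : ℝ → ℝ} {q : ℝ} (hu : 0 < u) (hΛ : ∀ᶠ w in 𝓝 u, HasDerivAt Λ (Λ' w) w)
    (hΛ' : HasDerivAt Λ' q u) (t : ℝ) :
    gauss (rotationalPatch Λ) u t = Λ' u * q / (u * (1 + Λ' u ^ 2) ^ 2) := by
  have hΛu := hΛ.self_of_nhds
  rw [gauss, unitNormal_eq hu hΛu, pd1_pd1_eq hΛ hΛ', pd2_pd1_eq hΛu, pd2_pd2_eq,
    dot3_pd1_pd1 hΛu, dot3_pd1_pd2 hΛu, dot3_pd2_pd2]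
  simp only [dot3, Prod.smul_mk, smul_eq_mul]
  set s := √(1 + Λ' u ^ 2)
  have hs : s ^ 2 = 1 + Λ' u ^ 2 := sq_sqrt (by positivity)
  have hs0 : s ≠ 0 := by positivity
  rw [← hs]
  field_simp
  linear_combination s ^ 2 * u ^ 2 * Λ' u * q * sin_sq_add_cos_sq t

theorem angleFun_sq_of_deriv_sqrt {c : ℝ} (hu : 0 < u) (hc : 0 < u ^ 2 + c - 1)
    (hΛ : HasDerivAt Λ (√(u ^ 2 + c - 1)) u) (t : ℝ) :
    angleFun (rotationalPatch Λ) u t ^ 2 = 1 / (u ^ 2 + c) := by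
  rw [angleFun_eq hu hΛ, inv_pow, sq_sqrt (by positivity), sq_sqrt hc.le, add_sub_cancel, one_div]

theorem gauss_of_deriv_sqrt {c : ℝ} (hu : 0 < u) (hc : 0 < u ^ 2 + c - 1)
    (hΛ : ∀ᶠ w in 𝓝 u, HasDerivAt Λ (√(w ^ 2 + c - 1)) w) (t : ℝ) :
    gauss (rotationalPatch Λ) u t = 1 / (u ^ 2 + c) ^ 2 := by
  have hΛ' : HasDerivAt (fun w => √(w ^ 2 + c - 1)) (u / √(u ^ 2 + c - 1)) u := by
    convert (((hasDerivAt_pow 2 u).add_const c).sub_const 1).sqrt hc.ne' using 1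
    field_simp
    norm_num [mul_comm]
  have hs : √(u ^ 2 + c - 1) ≠ 0 := (sqrt_pos.2 hc).ne'
  rw [gauss_eq hu hΛ hΛ', mul_div_cancel₀ u hs, sq_sqrt hc.le, add_sub_cancel,
    div_mul_cancel_left₀ hu.ne', one_div]

end rotationalPatch

open rotationalPatch

theorem rotational_translator_general
    (c : ℝ) (I : Set ℝ) (hIopen : IsOpen I)
    (hIpos : I ⊆ Set.Ioi (0 : ℝ))
    (hc : ∀ U ∈ I, 0 < U ^ 2 + c - 1)
    (Λ : ℝ → ℝ) (hΛC : ContDiffOn ℝ 2 Λ I)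
    (hΛ' : ∀ U ∈ I, deriv Λ U = Real.sqrt (U ^ 2 + c - 1))
    (X : ℝ → ℝ → ℝ × ℝ × ℝ)
    (hX : ∀ U t, X U t = (U * Real.cos t, U * Real.sin t, Λ U)) :
    ∀ U ∈ I, ∀ t : ℝ,
      dot3 (pd1 X U t) (pd1 X U t) = U ^ 2 + c ∧
      dot3 (pd1 X U t) (pd2 X U t) = 0 ∧
      dot3 (pd2 X U t) (pd2 X U t) = U ^ 2 ∧
      (angleFun X U t) ^ 2 = 1 / (U ^ 2 + c) ∧
      gauss X U t = 1 / (U ^ 2 + c) ^ 2 ∧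
      gauss X U t = (angleFun X U t) ^ 4 := by
  intro U hU t
  obtain rfl : X = rotationalPatch Λ := funext fun u => funext (hX u)
  have hU0 : 0 < U := hIpos hU
  have hcU := hc U hU
  have hΛ : ∀ᶠ u in 𝓝 U, HasDerivAt Λ (√(u ^ 2 + c - 1)) u := by
    filter_upwards [hIopen.mem_nhds hU] with u hu
    rw [← hΛ' u hu]
    exact ((hΛC.contDiffAt (hIopen.mem_nhds hu)).differentiableAt (by norm_num)).hasDerivAt
  have hK := gauss_of_deriv_sqrt hU0 hcU hΛ t
  have hn₃ := angleFun_sq_of_deriv_sqrt hU0 hcU hΛ.self_of_nhds t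
  refine ⟨(dot3_pd1_pd1 hΛ.self_of_nhds t).trans (by rw [sq_sqrt hcU.le, add_sub_cancel]),
    dot3_pd1_pd2 hΛ.self_of_nhds t, dot3_pd2_pd2 t, hn₃, hK, ?_⟩
  rw [hK, ← one_div_pow, ← hn₃]
  ring

/-- The rotational patch `X(U,t) = (U cos t, U sin t, Λ(U))` with
`Λ' = √(U² + c − 1)` has `E = U² + c`, `F = 0`, `G = U²`, squared angle function
`n₃² = 1/(U² + c)`, Gaussian curvature `K = 1/(U² + c)²`, and hence `K = n₃⁴`:
it is a `K^{1/4}`-translator. -/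
theorem rotational_translator
    (c : ℝ) (I : Set ℝ) (hIopen : IsOpen I) (hIconn : I.OrdConnected)
    (hIpos : I ⊆ Set.Ioi (0 : ℝ))
    (hc : ∀ U ∈ I, 0 < U ^ 2 + c - 1)
    (Λ : ℝ → ℝ) (hΛC : ContDiffOn ℝ 2 Λ I)
    (hΛ' : ∀ U ∈ I, deriv Λ U = Real.sqrt (U ^ 2 + c - 1))
    (X : ℝ → ℝ → ℝ × ℝ × ℝ)
    (hX : ∀ U t, X U t = (U * Real.cos t, U * Real.sin t, Λ U)) :
    ∀ U ∈ I, ∀ t : ℝ,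
      dot3 (pd1 X U t) (pd1 X U t) = U ^ 2 + c ∧
      dot3 (pd1 X U t) (pd2 X U t) = 0 ∧
      dot3 (pd2 X U t) (pd2 X U t) = U ^ 2 ∧
      (angleFun X U t) ^ 2 = 1 / (U ^ 2 + c) ∧
      gauss X U t = 1 / (U ^ 2 + c) ^ 2 ∧
      gauss X U t = (angleFun X U t) ^ 4 :=
  rotational_translator_general c I hIopen hIpos hc Λ hΛC hΛ' X hX
end
end

section
/- Let h, c ∈ ℝ and let I ⊆ (0, ∞) be an open interval on which U² − h² > 0, U² + c > 0, and P(U) := U⁴ + (c − 1 − h²)·U² − h²·c ≥ 0. Let R, Λ, Θ : I → ℝ be C¹ functions with R(U) = √(U² − h²), Λ'(U) = (U/(U² − h²))·√(P(U)), and Θ'(U) = (h/U²)·Λ'(U). Define the helicoidal patch X(U,t) = (R(U)·cos(t − Θ(U)), R(U)·sin(t − Θ(U)), Λ(U) + h·(t − Θ(U))). Then for every (U,t) ∈ I × ℝ the first fundamental form coefficients are E = U² + c, F = 0, and G = U²; i.e., the induced metric is (U² + c) dU² + U² dt². -/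
open Real

noncomputable section

open Topology

/-!
Since `R² = U² − h²`, the coefficient `G = R² + h²` is `U²`. The relation `U² Θ' = h Λ'` is exactly
what makes `F = h (Λ' − h Θ') − R² Θ'` vanish, and it turns `Λ' − h Θ'` into `(R²/U²) Λ'`, whence
`E = R'² + R² Θ'² + (Λ' − h Θ')² = (U² + P(U)) / (U² − h²)`; finally
`U² + P(U) = (U² − h²)(U² + c)`.
-/

def helicoid (h : ℝ) (R Λ Θ : ℝ → ℝ) (U t : ℝ) : ℝ × ℝ × ℝ :=
  (R U * cos (t - Θ U), R U * sin (t - Θ U), Λ U + h * (t - Θ U))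

section Helicoid

variable {h : ℝ} {R Λ Θ : ℝ → ℝ} {R' Λ' Θ' U : ℝ}

theorem pd1_helicoid (hR : HasDerivAt R R' U) (hΛ : HasDerivAt Λ Λ' U)
    (hΘ : HasDerivAt Θ Θ' U) (t : ℝ) :
    pd1 (helicoid h R Λ Θ) U t =
      (R' * cos (t - Θ U) + R U * Θ' * sin (t - Θ U),
        R' * sin (t - Θ U) - R U * Θ' * cos (t - Θ U), Λ' - h * Θ') := by
  have hφ : HasDerivAt (fun u => t - Θ u) (-Θ') U := hΘ.const_sub t
  refine HasDerivAt.deriv <| ((hR.mul hφ.cos).prodMk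
    ((hR.mul hφ.sin).prodMk (hΛ.add (hφ.const_mul h)))).congr_deriv ?_
  simp only [Prod.mk.injEq]
  refine ⟨?_, ?_, ?_⟩ <;> ring

theorem pd2_helicoid (t : ℝ) :
    pd2 (helicoid h R Λ Θ) U t = (-(R U * sin (t - Θ U)), R U * cos (t - Θ U), h) := by
  have hφ : HasDerivAt (fun v => v - Θ U) 1 t := (hasDerivAt_id t).sub_const _
  refine HasDerivAt.deriv <| ((hφ.cos.const_mul (R U)).prodMk
    ((hφ.sin.const_mul (R U)).prodMk ((hφ.const_mul h).const_add (Λ U)))).congr_deriv ?_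
  simp only [Prod.mk.injEq]
  refine ⟨?_, ?_, ?_⟩ <;> ring

theorem dot3_pd1_pd1_helicoid (hR : HasDerivAt R R' U) (hΛ : HasDerivAt Λ Λ' U)
    (hΘ : HasDerivAt Θ Θ' U) (t : ℝ) :
    dot3 (pd1 (helicoid h R Λ Θ) U t) (pd1 (helicoid h R Λ Θ) U t) =
      R' ^ 2 + R U ^ 2 * Θ' ^ 2 + (Λ' - h * Θ') ^ 2 := by
  rw [pd1_helicoid hR hΛ hΘ, dot3]
  linear_combination (R' ^ 2 + R U ^ 2 * Θ' ^ 2) * sin_sq_add_cos_sq (t - Θ U)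

theorem dot3_pd1_pd2_helicoid (hR : HasDerivAt R R' U) (hΛ : HasDerivAt Λ Λ' U)
    (hΘ : HasDerivAt Θ Θ' U) (t : ℝ) :
    dot3 (pd1 (helicoid h R Λ Θ) U t) (pd2 (helicoid h R Λ Θ) U t) =
      h * (Λ' - h * Θ') - R U ^ 2 * Θ' := by
  rw [pd1_helicoid hR hΛ hΘ, pd2_helicoid, dot3]
  linear_combination (-(R U ^ 2 * Θ')) * sin_sq_add_cos_sq (t - Θ U)

theorem dot3_pd2_pd2_helicoid (t : ℝ) :
    dot3 (pd2 (helicoid h R Λ Θ) U t) (pd2 (helicoid h R Λ Θ) U t) = R U ^ 2 + h ^ 2 := by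
  rw [pd2_helicoid, dot3]
  linear_combination R U ^ 2 * sin_sq_add_cos_sq (t - Θ U)

end Helicoid

theorem hasDerivAt_sqrt_sq_sub {h U : ℝ} (hU : 0 < U ^ 2 - h ^ 2) :
    HasDerivAt (fun u => √(u ^ 2 - h ^ 2)) (U / √(U ^ 2 - h ^ 2)) U := by
  have hsq : HasDerivAt (fun u => u ^ 2 - h ^ 2) (2 * U) U := by
    simpa using (hasDerivAt_pow 2 U).sub_const (h ^ 2)
  convert hsq.sqrt hU.ne' using 1
  rw [mul_div_mul_left _ _ two_ne_zero]

section Profile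

variable {h c U ρ p Λ' Θ' : ℝ}

theorem ne_zero_of_sq_sub_sq_pos (hU : 0 < U ^ 2 - h ^ 2) : U ≠ 0 := by
  rintro rfl
  nlinarith [sq_nonneg h]

theorem firstFundamentalE_eq_of_profile (hU : 0 < U ^ 2 - h ^ 2) (hρ : ρ ^ 2 = U ^ 2 - h ^ 2)
    (hp : p ^ 2 = U ^ 4 + (c - 1 - h ^ 2) * U ^ 2 - h ^ 2 * c)
    (hΛ' : Λ' = U / (U ^ 2 - h ^ 2) * p) (hΘ' : Θ' = h / U ^ 2 * Λ') :
    (U / ρ) ^ 2 + ρ ^ 2 * Θ' ^ 2 + (Λ' - h * Θ') ^ 2 = U ^ 2 + c := by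
  have hU0 := ne_zero_of_sq_sub_sq_pos hU
  have hρ0 : ρ ≠ 0 := by rintro rfl; linarith
  subst hΘ' hΛ'
  calc _ = (U ^ 2 + p ^ 2) / (U ^ 2 - h ^ 2) := by
        rw [div_pow, hρ]; field_simp; ring
    _ = U ^ 2 + c := by rw [hp]; field_simp; ring

theorem firstFundamentalF_eq_zero_of_profile (hU : U ≠ 0) (hρ : ρ ^ 2 = U ^ 2 - h ^ 2)
    (hΘ' : Θ' = h / U ^ 2 * Λ') :
    h * (Λ' - h * Θ') - ρ ^ 2 * Θ' = 0 := by
  rw [hρ, hΘ']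
  field_simp
  ring

end Profile

theorem helicoidal_metric_general
    (h c : ℝ) (I : Set ℝ) (hIopen : IsOpen I)
    (hUh : ∀ U ∈ I, 0 < U ^ 2 - h ^ 2)
    (hP : ∀ U ∈ I, 0 ≤ U ^ 4 + (c - 1 - h ^ 2) * U ^ 2 - h ^ 2 * c)
    (R Λ Θ : ℝ → ℝ)
    (hΛC : ContDiffOn ℝ 1 Λ I) (hΘC : ContDiffOn ℝ 1 Θ I)
    (hR : ∀ U ∈ I, R U = Real.sqrt (U ^ 2 - h ^ 2))
    (hΛ' : ∀ U ∈ I, deriv Λ U =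
      (U / (U ^ 2 - h ^ 2)) * Real.sqrt (U ^ 4 + (c - 1 - h ^ 2) * U ^ 2 - h ^ 2 * c))
    (hΘ' : ∀ U ∈ I, deriv Θ U = (h / U ^ 2) * deriv Λ U)
    (X : ℝ → ℝ → ℝ × ℝ × ℝ)
    (hX : ∀ U t, X U t =
      (R U * Real.cos (t - Θ U), R U * Real.sin (t - Θ U), Λ U + h * (t - Θ U))) :
    ∀ U ∈ I, ∀ t : ℝ,
      dot3 (pd1 X U t) (pd1 X U t) = U ^ 2 + c ∧
      dot3 (pd1 X U t) (pd2 X U t) = 0 ∧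
      dot3 (pd2 X U t) (pd2 X U t) = U ^ 2 := by
  intro U hU t
  have hU2 : 0 < U ^ 2 - h ^ 2 := hUh U hU
  obtain rfl : X = helicoid h R Λ Θ := funext fun U => funext (hX U)
  have hI : I ∈ 𝓝 U := hIopen.mem_nhds hU
  have hΛd : HasDerivAt Λ (deriv Λ U) U :=
    ((hΛC.differentiableOn one_ne_zero).differentiableAt hI).hasDerivAt
  have hΘd : HasDerivAt Θ (deriv Θ U) U :=
    ((hΘC.differentiableOn one_ne_zero).differentiableAt hI).hasDerivAt
  have hRU : R U = √(U ^ 2 - h ^ 2) := hR U hU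
  have hRd : HasDerivAt R (U / R U) U := by
    rw [hRU]
    exact (hasDerivAt_sqrt_sq_sub hU2).congr_of_eventuallyEq (Filter.eventually_of_mem hI hR)
  have hR2 : R U ^ 2 = U ^ 2 - h ^ 2 := by rw [hRU, sq_sqrt hU2.le]
  rw [dot3_pd1_pd1_helicoid hRd hΛd hΘd, dot3_pd1_pd2_helicoid hRd hΛd hΘd, dot3_pd2_pd2_helicoid]
  exact ⟨firstFundamentalE_eq_of_profile hU2 hR2 (sq_sqrt (hP U hU)) (hΛ' U hU) (hΘ' U hU),
    firstFundamentalF_eq_zero_of_profile (ne_zero_of_sq_sub_sq_pos hU2) hR2 (hΘ' U hU),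
    by rw [hR2]; ring⟩

/-- The helicoidal patch `H^h_c` in geometric coordinates `(U,t)` has
induced metric `(U² + c) dU² + U² dt²`, i.e. `E = U² + c`, `F = 0`, `G = U²`. -/
theorem helicoidal_metric
    (h c : ℝ) (I : Set ℝ) (hIopen : IsOpen I) (hIconn : I.OrdConnected)
    (hIpos : I ⊆ Set.Ioi (0 : ℝ))
    (hUh : ∀ U ∈ I, 0 < U ^ 2 - h ^ 2)
    (hUc : ∀ U ∈ I, 0 < U ^ 2 + c)
    (hP : ∀ U ∈ I, 0 ≤ U ^ 4 + (c - 1 - h ^ 2) * U ^ 2 - h ^ 2 * c)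
    (R Λ Θ : ℝ → ℝ)
    (hRC : ContDiffOn ℝ 1 R I) (hΛC : ContDiffOn ℝ 1 Λ I) (hΘC : ContDiffOn ℝ 1 Θ I)
    (hR : ∀ U ∈ I, R U = Real.sqrt (U ^ 2 - h ^ 2))
    (hΛ' : ∀ U ∈ I, deriv Λ U =
      (U / (U ^ 2 - h ^ 2)) * Real.sqrt (U ^ 4 + (c - 1 - h ^ 2) * U ^ 2 - h ^ 2 * c))
    (hΘ' : ∀ U ∈ I, deriv Θ U = (h / U ^ 2) * deriv Λ U)
    (X : ℝ → ℝ → ℝ × ℝ × ℝ)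
    (hX : ∀ U t, X U t =
      (R U * Real.cos (t - Θ U), R U * Real.sin (t - Θ U), Λ U + h * (t - Θ U))) :
    ∀ U ∈ I, ∀ t : ℝ,
      dot3 (pd1 X U t) (pd1 X U t) = U ^ 2 + c ∧
      dot3 (pd1 X U t) (pd2 X U t) = 0 ∧
      dot3 (pd2 X U t) (pd2 X U t) = U ^ 2 :=
  helicoidal_metric_general h c I hIopen hUh hP R Λ Θ hΛC hΘC hR hΛ' hΘ' X hX
end
end
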